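/- Let n ≥ 2 and let h : (0,∞) → [0,∞) be a nonincreasing measurable function. Then ∫_0^∞ (1 + |log s|)^{(n−1)/n} ( ∫_0^s h(r)^n dr )^{(1−n)/n} h(s)^n ds ≤ ∫_0^∞ s^{1/n − 1} (1 + |log s|)^{(n−1)/n} h(s) ds. -/

import Mathlib

/-!
Since `h` is nonincreasing, `∫_0^s hⁿ ≥ s h(s)ⁿ`. The exponent `(1 - n)/n` is nonpositive,
so the integrand on the left is pointwise at most
`(1 + |log s|)^{(n-1)/n} (s h(s)ⁿ)^{(1-n)/n} h(s)ⁿ`, which simplifies to the integrand on the right.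
-/

open MeasureTheory Set
open scoped ENNReal

lemma ENNReal.rpow_le_rpow_of_nonpos {x y : ℝ≥0∞} {z : ℝ} (hxy : x ≤ y) (hz : z ≤ 0) :
    y ^ z ≤ x ^ z := by
  simpa only [← ENNReal.rpow_neg, neg_neg] using
    ENNReal.inv_le_inv.2 (ENNReal.rpow_le_rpow hxy (neg_nonneg.2 hz))

lemma ofReal_mul_le_setLIntegral_Ioo_of_antitoneOn {f : ℝ → ℝ} {a b : ℝ} (hab : a < b)
    (hf : AntitoneOn f (Ioc a b)) :
    ENNReal.ofReal ((b - a) * f b) ≤ ∫⁻ r in Ioo a b, ENNReal.ofReal (f r) :=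
  calc ENNReal.ofReal ((b - a) * f b) = ∫⁻ _ in Ioo a b, ENNReal.ofReal (f b) := by
        rw [setLIntegral_const, Real.volume_Ioo, ENNReal.ofReal_mul (sub_nonneg.2 hab.le),
          mul_comm]
    _ ≤ ∫⁻ r in Ioo a b, ENNReal.ofReal (f r) :=
        setLIntegral_mono' measurableSet_Ioo fun r hr =>
          ENNReal.ofReal_le_ofReal (hf ⟨hr.1, hr.2.le⟩ (right_mem_Ioc.2 hab) hr.2.le)

lemma Real.mul_rpow_rpow_one_sub_div_mul_rpow {s t p : ℝ} (hs : 0 < s) (ht : 0 < t)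
    (hp : p ≠ 0) : (s * t ^ p) ^ ((1 - p) / p) * t ^ p = s ^ (1 / p - 1) * t := by
  have hexp : p * ((1 - p) / p) + p = 1 := by field_simp; ring
  rw [Real.mul_rpow hs.le (by positivity), ← Real.rpow_mul ht.le, mul_assoc, ← Real.rpow_add ht,
    hexp, Real.rpow_one]
  congr 2
  field_simp

lemma ofReal_mul_rpow_one_sub_div_mul_le_of_le {w s t p : ℝ} {I : ℝ≥0∞} (hp : 1 ≤ p)
    (hs : 0 < s) (ht : 0 ≤ t) (hI : ENNReal.ofReal (s * t ^ p) ≤ I) :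
    ENNReal.ofReal w * I ^ ((1 - p) / p) * ENNReal.ofReal (t ^ p) ≤
      ENNReal.ofReal (s ^ (1 / p - 1) * w * t) := by
  have hp0 : 0 < p := zero_lt_one.trans_le hp
  rcases ht.eq_or_lt with rfl | ht
  · simp [Real.zero_rpow hp0.ne']
  have hexp : (1 - p) / p ≤ 0 := div_nonpos_of_nonpos_of_nonneg (by linarith) hp0.le
  calc ENNReal.ofReal w * I ^ ((1 - p) / p) * ENNReal.ofReal (t ^ p)
      ≤ ENNReal.ofReal w * ENNReal.ofReal (s * t ^ p) ^ ((1 - p) / p) *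
          ENNReal.ofReal (t ^ p) := by
        gcongr ENNReal.ofReal w * ?_ * _
        exact ENNReal.rpow_le_rpow_of_nonpos hI hexp
    _ = ENNReal.ofReal (w * ((s * t ^ p) ^ ((1 - p) / p) * t ^ p)) := by
        have hB : 0 < s * t ^ p := by positivity
        rw [mul_assoc, ENNReal.ofReal_rpow_of_pos hB, ENNReal.ofReal_mul' (by positivity),
          ENNReal.ofReal_mul (Real.rpow_nonneg hB.le _)]
    _ = ENNReal.ofReal (s ^ (1 / p - 1) * w * t) := by
        rw [Real.mul_rpow_rpow_one_sub_div_mul_rpow hs ht hp0.ne']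
        ring_nf

theorem log_hardy_inequality_nonincreasing_general
    (n : ℕ) (hn : 2 ≤ n)
    (h : ℝ → ℝ)
    (hnonneg : ∀ s, 0 < s → 0 ≤ h s) (hmono : AntitoneOn h (Ioi 0)) :
    (∫⁻ s in Ioi (0 : ℝ),
        ENNReal.ofReal ((1 + |Real.log s|) ^ (((n : ℝ) - 1) / (n : ℝ))) *
          (∫⁻ r in Ioo (0 : ℝ) s, ENNReal.ofReal (h r ^ (n : ℝ)))
            ^ ((1 - (n : ℝ)) / (n : ℝ)) *
          ENNReal.ofReal (h s ^ (n : ℝ)))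
      ≤ ∫⁻ s in Ioi (0 : ℝ),
          ENNReal.ofReal (s ^ (1 / (n : ℝ) - 1) *
            (1 + |Real.log s|) ^ (((n : ℝ) - 1) / (n : ℝ)) * h s) := by
  have hn1 : (1 : ℝ) ≤ n := by exact_mod_cast one_le_two.trans hn
  refine setLIntegral_mono' measurableSet_Ioi fun s (hs : 0 < s) => ?_
  have hpow : AntitoneOn (fun r => h r ^ (n : ℝ)) (Ioc 0 s) := fun a ha b hb hab =>
    Real.rpow_le_rpow (hnonneg b hb.1) (hmono ha.1 hb.1 hab) (by positivity)
  have hinner := ofReal_mul_le_setLIntegral_Ioo_of_antitoneOn hs hpow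
  rw [sub_zero] at hinner
  exact ofReal_mul_rpow_one_sub_div_mul_le_of_le hn1 hs (hnonneg s hs) hinner

/-- **Logarithmic Hardy-type inequality for nonincreasing functions (case `p = n`).**
For `n ≥ 2` and `h : (0,∞) → [0,∞)` nonincreasing and measurable:
`∫_0^∞ (1+|log s|)^{(n−1)/n} (∫_0^s hⁿ)^{(1−n)/n} h(s)ⁿ ds
  ≤ ∫_0^∞ s^{1/n − 1} (1+|log s|)^{(n−1)/n} h(s) ds`
(the key fact being `∫_0^s hⁿ ≥ s h(s)ⁿ`). -/
theorem log_hardy_inequality_nonincreasing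
    (n : ℕ) (hn : 2 ≤ n)
    (h : ℝ → ℝ) (hmeas : Measurable h)
    (hnonneg : ∀ s, 0 < s → 0 ≤ h s) (hmono : AntitoneOn h (Ioi 0)) :
    (∫⁻ s in Ioi (0 : ℝ),
        ENNReal.ofReal ((1 + |Real.log s|) ^ (((n : ℝ) - 1) / (n : ℝ))) *
          (∫⁻ r in Ioo (0 : ℝ) s, ENNReal.ofReal (h r ^ (n : ℝ)))
            ^ ((1 - (n : ℝ)) / (n : ℝ)) *
          ENNReal.ofReal (h s ^ (n : ℝ)))
      ≤ ∫⁻ s in Ioi (0 : ℝ),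
          ENNReal.ofReal (s ^ (1 / (n : ℝ) - 1) *
            (1 + |Real.log s|) ^ (((n : ℝ) - 1) / (n : ℝ)) * h s) :=
  log_hardy_inequality_nonincreasing_general n hn h hnonneg hmono
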